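/- arXiv:2505.09996 — 6 statements merged into one kernel-verified Lean document; each statement's English description precedes it below -/
import Mathlib

section
/- Let R be a finite ring with unity, let χ be an additive character of R, let x ∈ R, and let K be the largest left ideal of R contained in (x)_ℓ ∩ {y ∈ R : χ(y) = 1}. Then: (a) if K = (x)_ℓ, then C_χ(x) = |[x]_ℓ|; (b) if K ≠ (x)_ℓ and K can be expressed as an intersection of some maximal R-left ideals of (x)_ℓ, then C_χ(x) = Σ_{E ⊆ M_R((x)_ℓ) with ⋂_{M∈E} M ⊆ K} (−1)^{|E|} · |⋂_{M∈E} M|; (c) otherwise C_χ(x) = 0. -/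
open scoped BigOperators
open Classical

variable {R : Type*}

/-- The left ideal of `R` generated by `x`, i.e. `(x)_ℓ`. -/
def lgen [Ring R] (x : R) : Submodule R R := Submodule.span R {x}

/-- `[x]_ℓ = {y : (y)_ℓ = (x)_ℓ}`. -/
def classL [Ring R] (x : R) : Set R := {y | lgen y = lgen x}

/-- The character sum `C_χ(x) = ∑_{s ∈ [x]_ℓ} χ(s)`. -/
noncomputable def CchiL [Ring R] (χ : AddChar R ℂ) (x : R) : ℂ :=
  ∑ᶠ s ∈ classL x, χ s

/-- The set `M_R(J)` of maximal `R`-left ideals of `J`. -/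
def maxROf [Ring R] (J : Submodule R R) : Set (Submodule R R) :=
  {M | M < J ∧ ∀ I' : Submodule R R, M < I' → ¬ I' < J}

/-- Intersection of the family `E` of left ideals, with the convention that the
empty intersection is `J`. -/
noncomputable def interIn [Ring R] (J : Submodule R R) (E : Set (Submodule R R)) : Submodule R R :=
  if E = ∅ then J else sInf E

/-!
An element generates `J = (x)_ℓ` iff it lies in `J` but in no maximal left ideal of `J`, so
inclusion–exclusion over `M_R(J)` writes `C_χ(x)` as an alternating sum of character sums over the
intersections `⋂ E`; by orthogonality such a sum is `|⋂ E|` if `⋂ E ⊆ K` and `0` otherwise. This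
is formula (b), valid unconditionally. In case (c) no term survives: if `⋂ E ⊆ K ⊊ J`, then `K`
contains the radical `⋂ M_R(J)`, and above the radical every left ideal of `J` has a supplement
meeting it inside the radical, which makes `K` the intersection of the maximal left ideals of `J`
containing it.
-/

section ModularLattice

variable {α : Type*} [CompleteLattice α] [IsModularLattice α] {J K M C : α}

theorem CovBy.inf_covBy_of_not_le (hM : M ⋖ J) (hCJ : C ≤ J) (hCM : ¬ C ≤ M) : M ⊓ C ⋖ C := by
  have hMC : M ⊔ C = J := (hM.eq_or_eq le_sup_left (sup_le hM.le hCJ)).resolve_left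
    fun h => hCM (h ▸ le_sup_right)
  exact inf_covBy_of_covBy_sup_left (hMC ▸ hM)

theorem exists_sup_eq_inf_le_sInf_covBy [WellFoundedLT α] {W : α} (hWJ : W ≤ J) :
    ∃ C ≤ J, W ⊔ C = J ∧ W ⊓ C ≤ sInf {M | M ⋖ J} := by
  obtain ⟨C, ⟨hCJ, hWC⟩, hmin⟩ := exists_minimal_of_wellFoundedLT
    (fun C => C ≤ J ∧ W ⊔ C = J) ⟨J, le_rfl, sup_eq_right.2 hWJ⟩
  refine ⟨C, hCJ, hWC, le_sInf fun M hM => ?_⟩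
  by_cases hCM : C ≤ M
  · exact inf_le_right.trans hCM
  by_contra hWCM
  have hcov : M ⊓ C ⋖ C := hM.inf_covBy_of_not_le hCJ hCM
  have hsup : M ⊓ C ⊔ W ⊓ C = C :=
    (hcov.eq_or_eq le_sup_left (sup_le inf_le_right inf_le_right)).resolve_left fun h =>
      hWCM ((h ▸ le_sup_right : W ⊓ C ≤ M ⊓ C).trans inf_le_left)
  -- `M ⊓ C` would be a smaller supplement of `W`
  have hW : W ⊔ M ⊓ C = J := by
    refine le_antisymm (sup_le hWJ (inf_le_right.trans hCJ)) ?_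
    calc J = W ⊔ (M ⊓ C ⊔ W ⊓ C) := by rw [hsup, hWC]
      _ ≤ W ⊔ M ⊓ C := sup_le le_sup_left (sup_le le_sup_right (inf_le_left.trans le_sup_left))
  exact hCM ((hmin ⟨inf_le_right.trans hCJ, hW⟩ inf_le_right).trans inf_le_left)

theorem sInf_setOf_covBy_and_le_eq [WellFoundedLT α] [IsStronglyCoatomic α]
    (hNK : sInf {M | M ⋖ J} ≤ K) (hKJ : K < J) : sInf {M | M ⋖ J ∧ K ≤ M} = K := by
  set K' := sInf {M | M ⋖ J ∧ K ≤ M}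
  obtain ⟨C, hCJ, hKC, hKCN⟩ := exists_sup_eq_inf_le_sInf_covBy hKJ.le
  obtain ⟨M₀, hKM₀, hM₀⟩ := exists_le_covBy_of_lt hKJ
  have hKK' : K ≤ K' := le_sInf fun M hM => hM.2
  -- `K' = K ⊔ K' ⊓ C`, and `K' ⊓ C` lies in every coatom `M`: otherwise `K ⊔ M ⊓ C` is a coatom
  -- above `K` meeting `C` only in `M ⊓ C`.
  have hK'C : K' ⊓ C ≤ sInf {M | M ⋖ J} := le_sInf fun M hM => by
    by_cases hCM : C ≤ M
    · exact inf_le_right.trans hCM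
    have hM'C : (K ⊔ M ⊓ C) ⊓ C = M ⊓ C := by
      rw [sup_comm, sup_inf_assoc_of_le _ inf_le_right]
      exact sup_eq_left.2 (le_inf (hKCN.trans (sInf_le hM)) inf_le_right)
    have hM' : K ⊔ M ⊓ C ⋖ J := by
      have := covBy_sup_of_inf_covBy_left (a := C) (b := K ⊔ M ⊓ C)
        (by rw [inf_comm, hM'C]; exact hM.inf_covBy_of_not_le hCJ hCM)
      rwa [← sup_assoc, sup_comm C, hKC, sup_eq_left.2 (inf_le_left.trans hM.le)] at this
    have hK'M' : K' ≤ K ⊔ M ⊓ C :=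
      sInf_le (show K ⊔ M ⊓ C ∈ {M | M ⋖ J ∧ K ≤ M} from ⟨hM', le_sup_left⟩)
    calc K' ⊓ C ≤ (K ⊔ M ⊓ C) ⊓ C := inf_le_inf_right C hK'M'
      _ = M ⊓ C := hM'C
      _ ≤ M := inf_le_left
  have hK'J : K' ≤ J := (sInf_le (show M₀ ∈ {M | M ⋖ J ∧ K ≤ M} from ⟨hM₀, hKM₀⟩)).trans hM₀.le
  refine le_antisymm ?_ hKK'
  calc K' = (K ⊔ C) ⊓ K' := by rw [hKC, inf_eq_right.2 hK'J]
    _ = K ⊔ C ⊓ K' := sup_inf_assoc_of_le C hKK'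
    _ ≤ K := sup_le le_rfl (inf_comm C K' ▸ hK'C.trans hNK)

end ModularLattice

section Ring

variable [Ring R] {J K : Submodule R R}

theorem mem_maxROf_iff {M : Submodule R R} : M ∈ maxROf J ↔ M ⋖ J := Iff.rfl

theorem lgen_le_iff {y : R} {I : Submodule R R} : lgen y ≤ I ↔ y ∈ I :=
  Submodule.span_singleton_le_iff_mem y I

theorem mem_classL_iff [Finite R] {x s : R} :
    s ∈ classL x ↔ s ∈ lgen x ∧ ∀ M ∈ maxROf (lgen x), s ∉ M := by
  refine ⟨fun hs => ⟨hs ▸ Submodule.mem_span_singleton_self s, fun M hM hsM => ?_⟩,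
    fun ⟨hsJ, hsM⟩ => ?_⟩
  · exact (mem_maxROf_iff.1 hM).lt.not_ge (hs ▸ lgen_le_iff.2 hsM)
  · refine (lgen_le_iff.2 hsJ).eq_of_not_lt fun hlt => ?_
    obtain ⟨M, hsM', hM⟩ := exists_le_covBy_of_lt hlt
    exact hsM M hM (lgen_le_iff.1 hsM')

theorem mem_interIn_iff {E : Set (Submodule R R)} (hE : E ⊆ maxROf J)
    {s : R} : s ∈ interIn J E ↔ s ∈ J ∧ ∀ M ∈ E, s ∈ M := by
  rcases E.eq_empty_or_nonempty with rfl | ⟨M, hM⟩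
  · simp [interIn]
  · rw [interIn, if_neg (Set.nonempty_iff_ne_empty.1 ⟨M, hM⟩), Submodule.mem_sInf]
    exact ⟨fun h => ⟨(mem_maxROf_iff.1 (hE hM)).le (h M hM), h⟩, And.right⟩

theorem interIn_le {E : Set (Submodule R R)} (hE : E ⊆ maxROf J) :
    interIn J E ≤ J :=
  fun _ hs => ((mem_interIn_iff hE).1 hs).1

theorem sInf_maxROf_le_of_interIn_le {E : Set (Submodule R R)} (hE : E ⊆ maxROf J)
    (hEK : interIn J E ≤ K) (hKJ : K < J) : sInf (maxROf J) ≤ K := by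
  rcases E.eq_empty_or_nonempty with rfl | hne
  · simp only [interIn] at hEK
    exact absurd hEK hKJ.not_ge
  · rw [interIn, if_neg hne.ne_empty] at hEK
    exact (sInf_le_sInf hE).trans hEK

theorem exists_interIn_eq_of_sInf_maxROf_le [Finite R] (hNK : sInf (maxROf J) ≤ K) (hKJ : K < J) :
    ∃ E ⊆ maxROf J, E.Nonempty ∧ interIn J E = K := by
  obtain ⟨M, hKM, hM⟩ := exists_le_covBy_of_lt hKJ
  have hne : {M | M ⋖ J ∧ K ≤ M}.Nonempty := ⟨M, hM, hKM⟩
  refine ⟨_, fun _ hM => hM.1, hne, ?_⟩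
  rw [interIn, if_neg hne.ne_empty]
  exact sInf_setOf_covBy_and_le_eq hNK hKJ

end Ring

theorem AddChar.sum_toFinset_addSubgroup {A : Type*} [AddCommGroup A] [Fintype A]
    (χ : AddChar A ℂ) (H : AddSubgroup A) :
    ∑ a ∈ (H : Set A).toFinset, χ a = if ∀ a ∈ H, χ a = 1 then (Nat.card H : ℂ) else 0 := by
  classical
  calc ∑ a ∈ (H : Set A).toFinset, χ a = ∑ a : H, χ.compAddMonoidHom H.subtype a :=
        Finset.sum_subtype _ (fun _ => Set.mem_toFinset) χ
    _ = _ := by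
        rw [AddChar.sum_eq_ite, Nat.card_eq_fintype_card]
        exact if_congr (by simp [AddChar.eq_zero_iff]) rfl rfl

theorem finsum_mem_setOf_subset_eq_sum_powerset {ι M : Type*} [AddCommMonoid M] {S : Set ι}
    (hS : S.Finite) (p : Set ι → Prop) (g : Set ι → M) :
    ∑ᶠ E ∈ {E | E ⊆ S ∧ p E}, g E =
      ∑ t ∈ hS.toFinset.powerset.filter (fun t : Finset ι => p ↑t), g ↑t := by
  have hS' : {E | E ⊆ S ∧ p E} =
      (↑) '' (↑(hS.toFinset.powerset.filter fun t : Finset ι => p t) : Set (Finset ι)) := by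
    ext E
    simp only [Set.mem_image, Finset.coe_filter, Finset.mem_powerset, Set.Finite.subset_toFinset]
    refine ⟨fun h => ⟨(hS.subset h.1).toFinset, by simpa using h, by simp⟩, ?_⟩
    rintro ⟨t, ht, rfl⟩
    exact ht
  rw [hS', finsum_mem_image Finset.coe_injective.injOn, finsum_mem_coe_finset]

section CharacterSum

variable [Ring R] [Fintype R] {χ : AddChar R ℂ} {J K : Submodule R R}

theorem sum_toFinset_eq_ite_le (hK : (K : Set R) ⊆ (J : Set R) ∩ {y | χ y = 1})
    (hKmax : ∀ L : Submodule R R, (L : Set R) ⊆ (J : Set R) ∩ {y | χ y = 1} → L ≤ K)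
    {I : Submodule R R} (hIJ : I ≤ J) :
    ∑ a ∈ (I : Set R).toFinset, χ a = if I ≤ K then (Nat.card I : ℂ) else 0 := by
  rw [← Submodule.coe_toAddSubgroup, AddChar.sum_toFinset_addSubgroup]
  refine if_congr ⟨fun h => hKmax I fun a ha => ⟨hIJ ha, h a ha⟩, fun h a ha => (hK (h ha)).2⟩
    rfl rfl

theorem CchiL_eq_finsum (x : R) (hK : (K : Set R) ⊆ (lgen x : Set R) ∩ {y | χ y = 1})
    (hKmax : ∀ L : Submodule R R, (L : Set R) ⊆ (lgen x : Set R) ∩ {y | χ y = 1} → L ≤ K) :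
    CchiL χ x = ∑ᶠ E ∈ {E : Set (Submodule R R) | E ⊆ maxROf (lgen x) ∧ interIn (lgen x) E ≤ K},
      ((-1 : ℂ) ^ (Nat.card E) * (Nat.card (interIn (lgen x) E) : ℂ)) := by
  set J := lgen x
  have h𝓜 := Set.toFinite (maxROf J)
  let f : R → ℂ := fun s => if s ∈ J then χ s else 0
  have hclassL : CchiL χ x = ∑ s ∈ h𝓜.toFinset.inf fun M => ((M : Set R).toFinset)ᶜ, f s := by
    rw [CchiL, finsum_mem_eq_toFinset_sum, ← Finset.sum_filter]
    refine Finset.sum_congr (Finset.ext fun s => ?_) fun _ _ => rfl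
    simp only [Finset.mem_filter, Finset.mem_inf, Finset.mem_compl, Set.mem_toFinset,
      Set.Finite.mem_toFinset, SetLike.mem_coe, mem_classL_iff]
    exact and_comm
  have hterm : ∀ t ∈ h𝓜.toFinset.powerset, ∑ s ∈ t.inf (fun M => (M : Set R).toFinset), f s =
      if interIn J t ≤ K then (Nat.card (interIn J t) : ℂ) else 0 := by
    intro t ht
    have htM : (t : Set _) ⊆ maxROf J := by simpa using ht
    rw [← sum_toFinset_eq_ite_le hK hKmax (interIn_le htM), ← Finset.sum_filter]
    refine Finset.sum_congr (Finset.ext fun s => ?_) fun _ _ => rfl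
    simp [mem_interIn_iff htM, Finset.mem_inf, and_comm]
  rw [hclassL, Finset.inclusion_exclusion_sum_inf_compl,
    finsum_mem_setOf_subset_eq_sum_powerset h𝓜, Finset.sum_filter]
  refine Finset.sum_congr rfl fun t ht => ?_
  rw [hterm t ht]
  simp

end CharacterSum

theorem stmt0 [Ring R] [Fintype R] (χ : AddChar R ℂ) (x : R) (K : Submodule R R)
    (hK : (K : Set R) ⊆ (lgen x : Set R) ∩ {y | χ y = 1})
    (hKmax : ∀ L : Submodule R R,
      (L : Set R) ⊆ (lgen x : Set R) ∩ {y | χ y = 1} → L ≤ K) :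
    (K = lgen x → CchiL χ x = Nat.card (classL x)) ∧
    ((K ≠ lgen x ∧ ∃ E : Set (Submodule R R),
        E ⊆ maxROf (lgen x) ∧ E.Nonempty ∧ interIn (lgen x) E = K) →
      CchiL χ x =
        ∑ᶠ E ∈ {E : Set (Submodule R R) |
            E ⊆ maxROf (lgen x) ∧ interIn (lgen x) E ≤ K},
          ((-1 : ℂ) ^ (Nat.card E) * (Nat.card (interIn (lgen x) E) : ℂ))) ∧
    ((K ≠ lgen x ∧ ¬ ∃ E : Set (Submodule R R),
        E ⊆ maxROf (lgen x) ∧ E.Nonempty ∧ interIn (lgen x) E = K) →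
      CchiL χ x = 0) := by
  refine ⟨fun hKJ => ?_, fun _ => CchiL_eq_finsum x hK hKmax, fun ⟨hKJ, hK_not_inter⟩ => ?_⟩
  · have hχ : ∀ s ∈ classL x, χ s = 1 := fun s hs =>
      (hK (hKJ ▸ (mem_classL_iff.1 hs).1 : s ∈ K)).2
    rw [CchiL, finsum_mem_congr rfl hχ]
    simp [finsum_mem_eq_toFinset_sum, Nat.card_eq_fintype_card]
  · have hKlt : K < lgen x := lt_of_le_of_ne (fun y hy => (hK hy).1) hKJ
    rw [CchiL_eq_finsum x hK hKmax, ← finsum_mem_empty]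
    refine finsum_mem_congr (Set.eq_empty_iff_forall_notMem.2 fun E ⟨hE, hEK⟩ => ?_) fun _ _ => rfl
    exact hK_not_inter (exists_interIn_eq_of_sInf_maxROf_le
      (sInf_maxROf_le_of_interIn_le hE hEK hKlt) hKlt)
end

section
/- Let R be a finite ring with unity, let I be a left ideal of R, and let K be a left ideal of R with K ⊊ I that can be expressed as an intersection of some maximal R-left ideals of I. Then φ_R(K,I) = Σ_{E ⊆ M_R(I,K)} (−1)^{|M_R(I,K)| − |E|} · ∏_{M ∈ E} (|I|/|M|). -/
open scoped BigOperators
open Classical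

variable {R : Type*}

/-- The set `M_R(J, K)` of maximal `R`-left ideals of `J` containing `K`. -/
def maxROfAbove [Ring R] (J K : Submodule R R) : Set (Submodule R R) :=
  {M | M ∈ maxROf J ∧ K ≤ M}

/-- The Möbius function `μ_R(I, J)` on left ideals of `R`. -/
noncomputable def muR [Ring R] (I J : Submodule R R) : ℤ :=
  if I = J then 1
  else if I < J ∧ ∃ E : Set (Submodule R R),
      E ⊆ maxROf J ∧ E.Nonempty ∧ interIn J E = I then
    (Nat.card {E : Set (Submodule R R) //
        E ⊆ maxROf J ∧ interIn J E = I ∧ Even (Nat.card E)} : ℤ)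
      - (Nat.card {E : Set (Submodule R R) //
        E ⊆ maxROf J ∧ interIn J E = I ∧ Odd (Nat.card E)} : ℤ)
  else 0

/-- The function `φ_R(I, J)` on left ideals of `R`. -/
noncomputable def phiR [Ring R] (I J : Submodule R R) : ℂ :=
  if I = J then 1
  else if I < J ∧ ∃ E : Set (Submodule R R),
      E ⊆ maxROf J ∧ E.Nonempty ∧ interIn J E = I then
    ∏ᶠ M ∈ maxROfAbove J I, ((Nat.card J : ℂ) / (Nat.card M : ℂ) - 1)
  else 1


theorem stmt11 [Ring R] [Fintype R] (I K : Submodule R R) (hKI : K < I)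
    (h : ∃ E : Set (Submodule R R), E ⊆ maxROf I ∧ E.Nonempty ∧ interIn I E = K) :
    phiR K I =
      ∑ᶠ E ∈ {E : Set (Submodule R R) | E ⊆ maxROfAbove I K},
        ((-1 : ℂ) ^ (Nat.card (maxROfAbove I K) - Nat.card E) *
          ∏ᶠ M ∈ E, ((Nat.card I : ℂ) / (Nat.card M : ℂ))) := by
  have hfin : (maxROfAbove I K).Finite := Set.toFinite _
  set a : Submodule R R → ℂ := fun M => (Nat.card I : ℂ) / (Nat.card M : ℂ) with ha
  set s : Finset (Submodule R R) := hfin.toFinset with hs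
  have hcoe : (↑s : Set (Submodule R R)) = maxROfAbove I K := hfin.coe_toFinset
  -- LHS
  have hL : phiR K I = ∏ M ∈ s, (a M - 1) := by
    rw [phiR, if_neg hKI.ne, if_pos ⟨hKI, h⟩, ← hcoe, finprod_mem_coe_finset]
  rw [hL]
  -- RHS set equals image of powerset
  have hset : {E : Set (Submodule R R) | E ⊆ maxROfAbove I K} =
      (fun t : Finset (Submodule R R) => (↑t : Set (Submodule R R))) '' ↑s.powerset := by
    ext E
    simp only [Set.mem_setOf_eq, Set.mem_image, Finset.mem_coe, Finset.mem_powerset]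
    constructor
    · intro hE
      have hEfin : E.Finite := Set.toFinite _
      refine ⟨hEfin.toFinset, ?_, hEfin.coe_toFinset⟩
      intro x hx
      rw [hs, Set.Finite.mem_toFinset]
      exact hE (by simpa using hx)
    · rintro ⟨t, ht, rfl⟩ x hx
      rw [← hcoe]
      exact ht hx
  rw [hset, finsum_mem_image (fun t _ u _ h => Finset.coe_injective h),
    finsum_mem_coe_finset]
  have hcardS : Nat.card (maxROfAbove I K) = s.card := by
    rw [← hcoe]; simp [Nat.card_coe_set_eq, Set.ncard_coe_finset]
  have hterm : ∀ t ∈ s.powerset,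
      ((-1 : ℂ) ^ (Nat.card (maxROfAbove I K) - Nat.card (↑t : Set (Submodule R R))) *
        ∏ᶠ M ∈ (↑t : Set (Submodule R R)), a M)
      = (∏ M ∈ t, a M) * (-1 : ℂ) ^ (s.card - t.card) := by
    intro t ht
    rw [finprod_mem_coe_finset, hcardS]
    have : Nat.card (↑t : Set (Submodule R R)) = t.card := by
      simp [Nat.card_coe_set_eq, Set.ncard_coe_finset]
    rw [this, mul_comm]
  rw [Finset.sum_congr rfl hterm]
  have : ∀ M ∈ s, a M - 1 = a M + (-1) := by intro M _; ring
  rw [Finset.prod_congr rfl this, Finset.prod_add]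
  refine Finset.sum_congr rfl fun t ht => ?_
  rw [Finset.prod_const, Finset.card_sdiff_of_subset (Finset.mem_powerset.mp ht)]
end

section
/- Let R be a finite ring with unity, let I be a left ideal of R, and let M_1 be a subset of M_R(I). Then M_1 is a minimal subset of itself (i.e., no proper subset E ⊊ M_1 satisfies ⋂_{M∈E} M = ⋂_{M∈M_1} M) if and only if |I| / |⋂_{M∈M_1} M| = ∏_{M∈M_1} (|I|/|M|). -/
open scoped BigOperators
open Classical

variable {R : Type*}

section Aux

variable [Ring R] [Fintype R]

lemma cardA (p p' : Submodule R R) :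
    Nat.card ↥(p ⊔ p') * Nat.card ↥(p ⊓ p') = Nat.card ↥p * Nat.card ↥p' := by
  have e := LinearMap.quotientInfEquivSupQuotient p p'
  have h1 := Submodule.card_eq_card_quotient_mul_card (Submodule.comap p.subtype (p ⊓ p'))
  have h2 := Submodule.card_eq_card_quotient_mul_card (Submodule.comap (p ⊔ p').subtype p')
  have c1 : Nat.card ↥(Submodule.comap p.subtype (p ⊓ p')) = Nat.card ↥(p ⊓ p') :=
    Nat.card_congr (Submodule.comapSubtypeEquivOfLe inf_le_left).toEquiv
  have c2 : Nat.card ↥(Submodule.comap (p ⊔ p').subtype p') = Nat.card ↥p' :=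
    Nat.card_congr (Submodule.comapSubtypeEquivOfLe le_sup_right).toEquiv
  have cq : Nat.card (↥p ⧸ Submodule.comap p.subtype (p ⊓ p')) =
      Nat.card (↥(p ⊔ p') ⧸ Submodule.comap (p ⊔ p').subtype p') := Nat.card_congr e.toEquiv
  rw [c1] at h1; rw [c2] at h2
  rw [h1, h2, cq]; ring

lemma cardn_pos (N : Submodule R R) : 0 < Nat.card ↥N := Nat.card_pos

lemma cardn_mono {A B : Submodule R R} (h : A ≤ B) : Nat.card ↥A ≤ Nat.card ↥B :=
  Nat.card_le_card_of_injective (Submodule.inclusion h) (Submodule.inclusion_injective h)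

lemma cardn_lt {A B : Submodule R R} (h : A < B) : Nat.card ↥A < Nat.card ↥B := by
  have hs : (A : Set R) ⊂ (B : Set R) := SetLike.coe_ssubset_coe.2 h
  have h2 := Set.ncard_lt_ncard hs (Set.toFinite _)
  rwa [← Nat.card_coe_set_eq, ← Nat.card_coe_set_eq] at h2

lemma interIn_eq (I : Submodule R R) (E : Set (Submodule R R)) (hE : ∀ M ∈ E, M ≤ I) :
    interIn I E = I ⊓ sInf E := by
  unfold interIn
  by_cases h : E = ∅
  · simp [h]
  · rw [if_neg h]
    obtain ⟨M, hM⟩ := Set.nonempty_iff_ne_empty.2 h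
    exact (inf_eq_right.2 ((sInf_le hM).trans (hE M hM))).symm

lemma one_lt_prod_rat {α : Type*} (f : α → ℚ) :
    ∀ s : Finset α, (∀ a ∈ s, 1 < f a) → s.Nonempty → 1 < ∏ a ∈ s, f a := by
  intro s
  induction s using Finset.cons_induction with
  | empty => intro _ h; simp at h
  | cons a s ha ih =>
    intro h _
    rw [Finset.prod_cons]
    rcases s.eq_empty_or_nonempty with rfl | hs
    · simpa using h a (by simp)
    · have h1 := h a (Finset.mem_cons_self a s)
      have h2 := ih (fun b hb => h b (Finset.mem_cons_of_mem hb)) hs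
      nlinarith

lemma key_forward (I : Submodule R R) :
    ∀ s : Finset (Submodule R R), ↑s ⊆ maxROf I →
      (∀ t : Finset (Submodule R R), t ⊂ s → I ⊓ t.inf id ≠ I ⊓ s.inf id) →
      (Nat.card ↥I : ℚ) / (Nat.card ↥(I ⊓ s.inf id) : ℚ)
        = ∏ M ∈ s, ((Nat.card ↥I : ℚ) / (Nat.card ↥M : ℚ)) := by
  intro s
  induction s using Finset.induction_on with
  | empty => simp
  | @insert M0 s hM0 ih =>
    intro hsub hirr
    have hsub' : ↑s ⊆ maxROf I := fun M hM => hsub (by simp [hM])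
    have hM0max : M0 ∈ maxROf I := hsub (by simp)
    have hM0le : M0 ≤ I := le_of_lt hM0max.1
    have hac : ∀ X : Submodule R R, I ⊓ (M0 ⊓ X) = M0 ⊓ (I ⊓ X) := fun X => inf_left_comm I M0 X
    -- irredundancy for s
    have hirr' : ∀ t : Finset (Submodule R R), t ⊂ s → I ⊓ t.inf id ≠ I ⊓ s.inf id := by
      intro t ht hcon
      obtain ⟨x, hxs, hxt⟩ := Finset.exists_of_ssubset ht
      have hss : insert M0 t ⊂ insert M0 s := by
        refine (Finset.ssubset_iff_of_subset (Finset.insert_subset_insert _ ht.subset)).2 ?_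
        exact ⟨x, Finset.mem_insert_of_mem hxs, by
          simp only [Finset.mem_insert, not_or]
          exact ⟨fun h => hM0 (h ▸ hxs), hxt⟩⟩
      apply hirr (insert M0 t) hss
      rw [Finset.inf_insert, Finset.inf_insert]
      simp only [id]
      rw [hac, hac, hcon]
    set N' := I ⊓ s.inf id with hN'
    have hN'le : N' ≤ I := inf_le_left
    have hns : ¬ N' ≤ M0 := by
      intro hle
      apply hirr s (Finset.ssubset_insert hM0)
      rw [Finset.inf_insert]
      simp only [id]
      rw [hac, ← hN', inf_comm M0 N', inf_eq_left.2 hle]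
    have hsup : M0 ⊔ N' = I := by
      have h1 : M0 < M0 ⊔ N' :=
        lt_of_le_of_ne le_sup_left (fun h => hns (sup_eq_left.mp h.symm))
      have h2 : M0 ⊔ N' ≤ I := sup_le hM0le hN'le
      exact h2.lt_or_eq.resolve_left (hM0max.2 _ h1)
    have hcard := cardA M0 N'
    rw [hsup] at hcard
    have hIeq : I ⊓ (insert M0 s).inf id = M0 ⊓ N' := by
      rw [Finset.inf_insert]; simp only [id]; rw [hac, ← hN']
    rw [hIeq, Finset.prod_insert hM0, ← ih hsub' hirr']
    have hb : (0 : ℚ) < (Nat.card ↥(M0 ⊓ N') : ℚ) := by exact_mod_cast cardn_pos _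
    have hc : (0 : ℚ) < (Nat.card ↥M0 : ℚ) := by exact_mod_cast cardn_pos _
    have hd : (0 : ℚ) < (Nat.card ↥N' : ℚ) := by exact_mod_cast cardn_pos _
    have hcard' : (Nat.card ↥I : ℚ) * (Nat.card ↥(M0 ⊓ N') : ℚ)
        = (Nat.card ↥M0 : ℚ) * (Nat.card ↥N' : ℚ) := by exact_mod_cast hcard
    rw [div_mul_div_comm, div_eq_div_iff hb.ne' (by positivity)]
    linear_combination (-(Nat.card ↥I : ℚ)) * hcard'

lemma key_le (I : Submodule R R) :
    ∀ s : Finset (Submodule R R), (∀ M ∈ s, M ≤ I) →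
      (Nat.card ↥I : ℚ) / (Nat.card ↥(I ⊓ s.inf id) : ℚ)
        ≤ ∏ M ∈ s, ((Nat.card ↥I : ℚ) / (Nat.card ↥M : ℚ)) := by
  intro s
  induction s using Finset.induction_on with
  | empty => simp
  | @insert M0 s hM0 ih =>
    intro hle
    have hM0le : M0 ≤ I := hle M0 (by simp)
    set N' := I ⊓ s.inf id with hN'
    have hN'le : N' ≤ I := inf_le_left
    have hIeq : I ⊓ (insert M0 s).inf id = M0 ⊓ N' := by
      rw [Finset.inf_insert]; simp only [id]; rw [inf_left_comm, ← hN']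
    rw [hIeq, Finset.prod_insert hM0]
    have ha : (0 : ℚ) < (Nat.card ↥I : ℚ) := by exact_mod_cast cardn_pos _
    have hb : (0 : ℚ) < (Nat.card ↥(M0 ⊓ N') : ℚ) := by exact_mod_cast cardn_pos _
    have hc : (0 : ℚ) < (Nat.card ↥M0 : ℚ) := by exact_mod_cast cardn_pos _
    have hd : (0 : ℚ) < (Nat.card ↥N' : ℚ) := by exact_mod_cast cardn_pos _
    have hcard := cardA M0 N'
    have hmono : Nat.card ↥(M0 ⊔ N') ≤ Nat.card ↥I := cardn_mono (sup_le hM0le hN'le)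
    have hineq : (Nat.card ↥M0 : ℚ) * (Nat.card ↥N' : ℚ)
        ≤ (Nat.card ↥I : ℚ) * (Nat.card ↥(M0 ⊓ N') : ℚ) := by
      have : (Nat.card ↥M0 : ℚ) * (Nat.card ↥N' : ℚ)
          = (Nat.card ↥(M0 ⊔ N') : ℚ) * (Nat.card ↥(M0 ⊓ N') : ℚ) := by exact_mod_cast hcard.symm
      rw [this]
      have : (Nat.card ↥(M0 ⊔ N') : ℚ) ≤ (Nat.card ↥I : ℚ) := by exact_mod_cast hmono
      nlinarith
    have step1 : (Nat.card ↥I : ℚ) / (Nat.card ↥(M0 ⊓ N') : ℚ)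
        ≤ ((Nat.card ↥I : ℚ) / (Nat.card ↥M0 : ℚ)) * ((Nat.card ↥I : ℚ) / (Nat.card ↥N' : ℚ)) := by
      rw [div_mul_div_comm, div_le_div_iff₀ hb (by positivity)]
      nlinarith
    have step2 := ih (fun M hM => hle M (Finset.mem_insert_of_mem hM))
    calc (Nat.card ↥I : ℚ) / (Nat.card ↥(M0 ⊓ N') : ℚ)
        ≤ ((Nat.card ↥I : ℚ) / (Nat.card ↥M0 : ℚ)) * ((Nat.card ↥I : ℚ) / (Nat.card ↥N' : ℚ)) :=
          step1
      _ ≤ ((Nat.card ↥I : ℚ) / (Nat.card ↥M0 : ℚ)) * ∏ M ∈ s,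
            ((Nat.card ↥I : ℚ) / (Nat.card ↥M : ℚ)) :=
          mul_le_mul_of_nonneg_left step2 (by positivity)

end Aux

theorem stmt12 [Ring R] [Fintype R] (I : Submodule R R) (M1 : Set (Submodule R R))
    (hM1 : M1 ⊆ maxROf I) :
    (∀ E : Set (Submodule R R), E ⊂ M1 → interIn I E ≠ interIn I M1) ↔
      (Nat.card I : ℚ) / (Nat.card (interIn I M1) : ℚ) =
        ∏ᶠ M ∈ M1, ((Nat.card I : ℚ) / (Nat.card M : ℚ)) := by
  haveI : Finite (Submodule R R) :=
    Finite.of_injective (fun N : Submodule R R => (N : Set R)) SetLike.coe_injective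
  have hfin : M1.Finite := Set.toFinite M1
  set s := hfin.toFinset with hsdef
  have hcoe : (↑s : Set (Submodule R R)) = M1 := hfin.coe_toFinset
  have hle : ∀ M ∈ M1, M ≤ I := fun M hM => le_of_lt (hM1 hM).1
  have hinter : ∀ E : Set (Submodule R R), E ⊆ M1 → interIn I E = I ⊓ sInf E :=
    fun E hE => interIn_eq I E (fun M hM => hle M (hE hM))
  have hIM1 : interIn I M1 = I ⊓ s.inf id := by
    rw [hinter M1 subset_rfl, ← hcoe, ← Finset.inf_id_eq_sInf]
  have hprod : ∏ᶠ M ∈ M1, ((Nat.card ↥I : ℚ) / (Nat.card ↥M : ℚ))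
      = ∏ M ∈ s, ((Nat.card ↥I : ℚ) / (Nat.card ↥M : ℚ)) := by
    rw [← hcoe, finprod_mem_coe_finset]
  have htrans : ∀ t : Finset (Submodule R R), (↑t : Set (Submodule R R)) ⊆ M1 →
      interIn I ↑t = I ⊓ t.inf id := by
    intro t ht
    rw [hinter ↑t ht, ← Finset.inf_id_eq_sInf]
  constructor
  · intro hirr
    rw [hIM1, hprod]
    apply key_forward I s (by rw [hcoe]; exact hM1)
    intro t ht hcon
    have hEt : (↑t : Set (Submodule R R)) ⊂ M1 := by
      rw [← hcoe]; exact_mod_cast ht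
    apply hirr ↑t hEt
    rw [htrans t hEt.subset, hIM1, hcon]
  · intro heq E hE hcon
    have hEfin : E.Finite := hfin.subset hE.subset
    have hcoet : (↑hEfin.toFinset : Set (Submodule R R)) = E := hEfin.coe_toFinset
    set t := hEfin.toFinset with htdef
    have hts : t ⊂ s := by
      rw [← Finset.coe_ssubset, hcoet, hcoe]; exact hE
    have h1 := key_le I t (fun M hM => hle M (hE.subset (hcoet ▸ Finset.mem_coe.2 hM)))
    have h2 : interIn I E = I ⊓ t.inf id := by rw [← hcoet]; exact htrans t (hcoet ▸ hE.subset)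
    -- each factor over s \ t is > 1
    have hfac : ∀ M ∈ s \ t, 1 < (Nat.card ↥I : ℚ) / (Nat.card ↥M : ℚ) := by
      intro M hM
      have hMs : M ∈ M1 := by rw [← hcoe]; exact Finset.mem_coe.2 (Finset.mem_sdiff.1 hM).1
      have hlt : Nat.card ↥M < Nat.card ↥I := cardn_lt (hM1 hMs).1
      have hp : (0 : ℚ) < (Nat.card ↥M : ℚ) := by exact_mod_cast cardn_pos M
      rw [lt_div_iff₀ hp, one_mul]
      exact_mod_cast hlt
    have hne : (s \ t).Nonempty := by
      rw [Finset.sdiff_nonempty]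
      exact fun h => hts.2 h
    have hgt : 1 < ∏ M ∈ s \ t, ((Nat.card ↥I : ℚ) / (Nat.card ↥M : ℚ)) :=
      one_lt_prod_rat _ _ hfac hne
    have hpos : 0 < ∏ M ∈ t, ((Nat.card ↥I : ℚ) / (Nat.card ↥M : ℚ)) := by
      apply Finset.prod_pos
      intro M hM
      have hm : (0 : ℚ) < (Nat.card ↥M : ℚ) := by exact_mod_cast cardn_pos M
      have hi : (0 : ℚ) < (Nat.card ↥I : ℚ) := by exact_mod_cast cardn_pos I
      exact div_pos hi hm
    have hlt2 : ∏ M ∈ t, ((Nat.card ↥I : ℚ) / (Nat.card ↥M : ℚ))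
        < ∏ M ∈ s, ((Nat.card ↥I : ℚ) / (Nat.card ↥M : ℚ)) := by
      rw [← Finset.prod_sdiff hts.subset]
      nlinarith
    rw [h2, hIM1] at hcon
    rw [hprod, hIM1] at heq
    rw [hcon] at h1
    rw [heq] at h1
    exact absurd (lt_of_le_of_lt h1 hlt2) (lt_irrefl _)
end

section
/- Let R be a finite ring with unity and let K ⊊ I be left ideals of R. If ⋂_{M ∈ M_R(I)} M ⊆ K, then K can be expressed as an intersection of some maximal R-left ideals of I; moreover, K = ⋂_{M ∈ M_R(I,K)} M. -/
open scoped BigOperators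
open Classical

variable {R : Type*}

/-!
Write `rad I` for the intersection of the maximal left ideals of `I`. In the modular lattice of
left ideals, every `P ≤ I` has a relative complement modulo `rad I`: a minimal `E ≤ I` with
`E ⊔ P = I` satisfies `E ⊓ P ≤ rad I`. Applying this to the intersection `S` of the maximal
left ideals of `I` containing `K` gives `E` with `(K ⊔ E) ⊓ S = K`. If `K ⊔ E` were proper it
would lie in a maximal left ideal of `I` containing both `E` and `S`, hence `I = E ⊔ S`; so
`K ⊔ E = I` and `S = K`.
-/

section CovBy

variable {α : Type*} [CompleteLattice α] [IsModularLattice α]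

theorem exists_sup_eq_and_inf_le_sInf_setOf_covBy [WellFoundedLT α] {p i : α} (hpi : p ≤ i) :
    ∃ e ≤ i, e ⊔ p = i ∧ e ⊓ p ≤ sInf {m | m ⋖ i} := by
  obtain ⟨e, ⟨hei, hep⟩, hmin⟩ :=
    exists_minimal_of_wellFoundedLT (fun e => e ≤ i ∧ e ⊔ p = i) ⟨i, le_rfl, sup_eq_left.2 hpi⟩
  refine ⟨e, hei, hep, le_sInf fun m (hm : m ⋖ i) => ?_⟩
  by_contra hepm
  have hsup : m ⊔ e ⊓ p = i :=
    (hm.eq_or_eq le_sup_left (sup_le hm.le (inf_le_left.trans hei))).resolve_left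
      fun h => hepm (h ▸ le_sup_right)
  have he : e ≤ e ⊓ m ⊔ p :=
    calc e = (e ⊓ p ⊔ m) ⊓ e := by rw [sup_comm, hsup, inf_eq_right.2 hei]
      _ = e ⊓ p ⊔ m ⊓ e := sup_inf_assoc_of_le m inf_le_left
      _ ≤ e ⊓ m ⊔ p := sup_le (inf_le_right.trans le_sup_right) (le_sup_of_le_left (inf_comm m e).le)
  have hem : e ≤ e ⊓ m :=
    hmin ⟨inf_le_left.trans hei, le_antisymm (sup_le (inf_le_left.trans hei) hpi)
      (hep ▸ sup_le he le_sup_right)⟩ inf_le_left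
  exact hepm (inf_le_left.trans (hem.trans inf_le_right))

theorem sInf_setOf_covBy_and_le_eq_s14 [WellFoundedLT α] [IsStronglyCoatomic α] {k i : α} (hki : k < i)
    (hrad : sInf {m | m ⋖ i} ≤ k) : sInf {m | m ⋖ i ∧ k ≤ m} = k := by
  set s := sInf {m | m ⋖ i ∧ k ≤ m}
  have hks : k ≤ s := le_sInf fun m hm => hm.2
  have hsi : s ≤ i := by
    obtain ⟨m, hkm, hmi⟩ := exists_le_covBy_of_lt hki
    exact (sInf_le (show m ∈ {m | m ⋖ i ∧ k ≤ m} from ⟨hmi, hkm⟩)).trans hmi.le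
  obtain ⟨e, hei, hes, hrel⟩ := exists_sup_eq_and_inf_le_sInf_setOf_covBy hsi
  have hkes : (k ⊔ e) ⊓ s = k := by
    rw [sup_inf_assoc_of_le e hks]
    exact sup_eq_left.2 (hrel.trans hrad)
  have hke : k ⊔ e = i := by
    by_contra hne
    obtain ⟨m, hkem, hmi⟩ := exists_le_covBy_of_lt (lt_of_le_of_ne (sup_le hki.le hei) hne)
    have hsm : s ≤ m := sInf_le ⟨hmi, le_sup_left.trans hkem⟩
    exact hmi.lt.not_ge (hes ▸ sup_le (le_sup_right.trans hkem) hsm)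
  rwa [hke, inf_eq_right.2 hsi] at hkes

end CovBy

theorem maxROf_eq_setOf_covBy [Ring R] (I : Submodule R R) : maxROf I = {M | M ⋖ I} := rfl

theorem maxROfAbove_eq_setOf_covBy [Ring R] (I K : Submodule R R) :
    maxROfAbove I K = {M | M ⋖ I ∧ K ≤ M} := rfl

theorem stmt14 [Ring R] [Fintype R] (K I : Submodule R R) (hKI : K < I)
    (h : interIn I (maxROf I) ≤ K) :
    (∃ E : Set (Submodule R R), E ⊆ maxROf I ∧ E.Nonempty ∧ interIn I E = K) ∧
      K = sInf (maxROfAbove I K) := by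
  have hmax : (maxROfAbove I K).Nonempty :=
    let ⟨M, hKM, hM⟩ := exists_le_covBy_of_lt hKI
    ⟨M, hM, hKM⟩
  have hrad : sInf {M | M ⋖ I} ≤ K := by
    rwa [interIn, if_neg (hmax.mono fun M hM => hM.1).ne_empty, maxROf_eq_setOf_covBy] at h
  have hK : K = sInf (maxROfAbove I K) := by
    rw [maxROfAbove_eq_setOf_covBy, sInf_setOf_covBy_and_le_eq_s14 hKI hrad]
  refine ⟨⟨maxROfAbove I K, fun M hM => hM.1, hmax, ?_⟩, hK⟩
  rw [interIn, if_neg hmax.ne_empty, ← hK]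
end

section
/- Let R be a finite ring with unity, let J be a left ideal of R such that M_R(J) is a minimal subset of itself (i.e., no proper subset E ⊊ M_R(J) satisfies ⋂_{M∈E} M = ⋂_{M∈M_R(J)} M), and let I be a left ideal of R with I = ⋂_{M∈E} M for some nonempty subset E ⊆ M_R(J). Then μ_R(I,J) = (−1)^{|E|}; in particular, the subset E ⊆ M_R(J) with ⋂_{M∈E} M = I is unique. -/
open scoped BigOperators
open Classical

variable {R : Type*}

lemma interIn_of_nonempty [Ring R] (J : Submodule R R) {E : Set (Submodule R R)}
    (h : E.Nonempty) : interIn J E = sInf E := by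
  rw [interIn, if_neg h.ne_empty]

lemma helper15 [Ring R] (J : Submodule R R) (A B : Set (Submodule R R))
    (hA : A ⊆ maxROf J) (hB : B ⊆ maxROf J) (hBne : B.Nonempty)
    (M : Submodule R R) (hMA : M ∈ A) (hMB : M ∉ B)
    (hsame : sInf A = sInf B)
    (hmin : ∀ E : Set (Submodule R R), E ⊂ maxROf J →
      interIn J E ≠ interIn J (maxROf J)) : False := by
  set F : Set (Submodule R R) := maxROf J \ {M} with hF
  have hBF : B ⊆ F := fun x hx => ⟨hB hx, fun hxM => hMB (by simpa [Set.mem_singleton_iff.mp hxM] using hx)⟩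
  have hFA : F ∪ A = maxROf J := by
    apply Set.Subset.antisymm
    · exact Set.union_subset (Set.diff_subset) hA
    · intro x hx
      by_cases hxM : x = M
      · exact Or.inr (hxM ▸ hMA)
      · exact Or.inl ⟨hx, hxM⟩
  have hFB : F ∪ B = F := Set.union_eq_self_of_subset_right hBF
  have h1 : sInf F ⊓ sInf A = sInf (maxROf J) := by rw [← sInf_union, hFA]
  have h2 : sInf F ⊓ sInf B = sInf F := by rw [← sInf_union, hFB]
  have hFeq : sInf F = sInf (maxROf J) := by rw [← h2, ← hsame, h1]
  have hFne : F.Nonempty := hBne.mono hBF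
  have hMmax : M ∈ maxROf J := hA hMA
  have hss : F ⊂ maxROf J :=
    ⟨Set.diff_subset, fun h => (h hMmax).2 rfl⟩
  exact hmin F hss (by
    rw [interIn_of_nonempty J hFne, interIn_of_nonempty J ⟨M, hMmax⟩, hFeq])

theorem stmt15 [Ring R] [Fintype R] (J I : Submodule R R)
    (hmin : ∀ E : Set (Submodule R R), E ⊂ maxROf J →
      interIn J E ≠ interIn J (maxROf J))
    (E : Set (Submodule R R)) (hE : E ⊆ maxROf J) (hEne : E.Nonempty)
    (hEI : interIn J E = I) :
    muR I J = (-1) ^ (Nat.card E) ∧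
      ∀ E' : Set (Submodule R R), E' ⊆ maxROf J → E'.Nonempty →
        interIn J E' = I → E' = E := by
  obtain ⟨M0, hM0⟩ := hEne
  have hIsinf : sInf E = I := by rw [← interIn_of_nonempty J ⟨M0, hM0⟩, hEI]
  have hI_lt : I < J := lt_of_le_of_lt (hIsinf ▸ sInf_le hM0) (hE hM0).1
  have key : ∀ E' : Set (Submodule R R), E' ⊆ maxROf J → E'.Nonempty →
      interIn J E' = I → E' = E := by
    intro E' hE' hE'ne hE'I
    have hE'sinf : sInf E' = I := by rw [← interIn_of_nonempty J hE'ne, hE'I]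
    by_contra hne
    have hdiff : ∃ M, (M ∈ E ∧ M ∉ E') ∨ (M ∈ E' ∧ M ∉ E) := by
      by_contra h
      push_neg at h
      exact hne (Set.ext fun x => by have := h x; tauto)
    obtain ⟨M, hM | hM⟩ := hdiff
    · exact helper15 J E E' hE hE' hE'ne M hM.1 hM.2 (by rw [hIsinf, hE'sinf]) hmin
    · exact helper15 J E' E hE' hE ⟨M0, hM0⟩ M hM.1 hM.2 (by rw [hIsinf, hE'sinf]) hmin
  refine ⟨?_, key⟩
  have heq : ∀ E'' : Set (Submodule R R),
      (E'' ⊆ maxROf J ∧ interIn J E'' = I) ↔ E'' = E := by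
    intro E''
    constructor
    · rintro ⟨h1, h2⟩
      rcases Set.eq_empty_or_nonempty E'' with h | h
      · exfalso
        rw [h, interIn, if_pos rfl] at h2
        exact hI_lt.ne' h2
      · exact key E'' h1 h h2
    · rintro rfl; exact ⟨hE, hEI⟩
  rw [muR, if_neg hI_lt.ne, if_pos ⟨hI_lt, E, hE, ⟨M0, hM0⟩, hEI⟩]
  by_cases hpar : Even (Nat.card E)
  · have hcE : Nat.card {E'' : Set (Submodule R R) //
        E'' ⊆ maxROf J ∧ interIn J E'' = I ∧ Even (Nat.card E'')} = 1 := by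
      rw [Nat.card_eq_one_iff_unique]
      constructor
      · constructor
        rintro ⟨x, hx⟩ ⟨y, hy⟩
        have hx' := (heq x).1 ⟨hx.1, hx.2.1⟩
        have hy' := (heq y).1 ⟨hy.1, hy.2.1⟩
        exact Subtype.ext (hx'.trans hy'.symm)
      · exact ⟨⟨E, hE, hEI, hpar⟩⟩
    have hcO : Nat.card {E'' : Set (Submodule R R) //
        E'' ⊆ maxROf J ∧ interIn J E'' = I ∧ Odd (Nat.card E'')} = 0 := by
      have : IsEmpty {E'' : Set (Submodule R R) //
          E'' ⊆ maxROf J ∧ interIn J E'' = I ∧ Odd (Nat.card E'')} := by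
        constructor
        rintro ⟨x, hx⟩
        have hx' := (heq x).1 ⟨hx.1, hx.2.1⟩
        rw [hx'] at hx
        exact (Nat.not_even_iff_odd.mpr hx.2.2) hpar
      exact Nat.card_of_isEmpty
    rw [hcE, hcO, hpar.neg_one_pow]
    norm_num
  · rw [Nat.not_even_iff_odd] at hpar
    have hcE : Nat.card {E'' : Set (Submodule R R) //
        E'' ⊆ maxROf J ∧ interIn J E'' = I ∧ Even (Nat.card E'')} = 0 := by
      have : IsEmpty {E'' : Set (Submodule R R) //
          E'' ⊆ maxROf J ∧ interIn J E'' = I ∧ Even (Nat.card E'')} := by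
        constructor
        rintro ⟨x, hx⟩
        have hx' := (heq x).1 ⟨hx.1, hx.2.1⟩
        rw [hx'] at hx
        exact (Nat.not_even_iff_odd.mpr hpar) hx.2.2
      exact Nat.card_of_isEmpty
    have hcO : Nat.card {E'' : Set (Submodule R R) //
        E'' ⊆ maxROf J ∧ interIn J E'' = I ∧ Odd (Nat.card E'')} = 1 := by
      rw [Nat.card_eq_one_iff_unique]
      constructor
      · constructor
        rintro ⟨x, hx⟩ ⟨y, hy⟩
        have hx' := (heq x).1 ⟨hx.1, hx.2.1⟩
        have hy' := (heq y).1 ⟨hy.1, hy.2.1⟩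
        exact Subtype.ext (hx'.trans hy'.symm)
      · exact ⟨⟨E, hE, hEI, hpar⟩⟩
    rw [hcE, hcO, hpar.neg_one_pow]
    norm_num
end

section
/- Let R be a finite ring with unity, let χ be an additive character of R, and let x ∈ R. Then C_χ(x) = Σ_{I} |I| · μ_R(I,(x)_ℓ), where the sum runs over all left ideals I of R with I ⊆ (x)_ℓ and χ(y) = 1 for all y ∈ I. -/
open scoped BigOperators
open Classical

variable {R : Type*}

section aux
variable [Ring R] [Fintype R]

instance : Finite (Submodule R R) :=
  Finite.of_injective (fun I => (I : Set R)) SetLike.coe_injective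

noncomputable instance : Fintype (Submodule R R) := Fintype.ofFinite _

lemma exists_max_above {I J : Submodule R R} (h : I < J) :
    ∃ M ∈ maxROf J, I ≤ M := by
  obtain ⟨M, hIM, hmax⟩ := Finite.exists_le_maximal (p := fun K : Submodule R R => K < J) h
  exact ⟨M, ⟨hmax.1, fun I' hMI' hI'J => absurd (hmax.2 hI'J hMI'.le) (not_le_of_gt hMI')⟩, hIM⟩

lemma mem_interIn {J : Submodule R R} {E : Finset (Submodule R R)}
    (hE : ↑E ⊆ maxROf J) (y : R) :
    y ∈ interIn J ↑E ↔ (y ∈ J ∧ ∀ M ∈ E, y ∈ M) := by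
  by_cases h : E = ∅
  · subst h; simp [interIn]
  · have hne : (↑E : Set (Submodule R R)) ≠ ∅ := by simpa using h
    rw [interIn, if_neg hne, Submodule.mem_sInf]
    constructor
    · intro hy
      obtain ⟨M0, hM0⟩ := Finset.nonempty_of_ne_empty h
      exact ⟨(hE hM0).1.le (hy M0 hM0), fun M hM => hy M hM⟩
    · intro h' p hp
      exact h'.2 p hp

lemma interIn_lt {J : Submodule R R} {E : Finset (Submodule R R)}
    (hE : ↑E ⊆ maxROf J) (h : E ≠ ∅) : interIn J ↑E < J := by
  obtain ⟨M0, hM0⟩ := Finset.nonempty_of_ne_empty h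
  have hne : (↑E : Set (Submodule R R)) ≠ ∅ := by simpa using h
  rw [interIn, if_neg hne]
  exact lt_of_le_of_lt (sInf_le (by exact_mod_cast hM0)) (hE hM0).1

lemma sum_ideal (χ : AddChar R ℂ) (I : Submodule R R) :
    (∑ y : R, if y ∈ I then χ y else 0)
      = if (∀ y ∈ I, χ y = 1) then (Nat.card I : ℂ) else 0 := by
  have h1 : (∑ y : R, if y ∈ I then χ y else 0) = ∑ y : I, χ ↑y := by
    rw [← Finset.sum_filter, ← Finset.sum_subtype (Finset.univ.filter (· ∈ I))
      (fun y => by simp) (fun y : R => χ y)]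
  rw [h1]
  set ψ : AddChar I ℂ := χ.compAddMonoidHom I.subtype.toAddMonoidHom with hψ
  have h2 : ∀ y : I, χ ↑y = ψ y := fun y => rfl
  simp_rw [h2]
  rw [AddChar.sum_eq_ite]
  have h3 : ψ = 0 ↔ ∀ y ∈ I, χ y = 1 := by
    rw [AddChar.eq_zero_iff]
    constructor
    · intro h y hy; exact h ⟨y, hy⟩
    · intro h z; exact h z z.2
  have h4 : (Fintype.card I : ℂ) = (Nat.card I : ℂ) := by
    rw [Nat.card_eq_fintype_card]
  by_cases h : ∀ y ∈ I, χ y = 1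
  · rw [if_pos (h3.2 h), if_pos h, h4]
  · rw [if_neg (fun hh => h (h3.1 hh)), if_neg h]

lemma natCard_set_eq (Q : Set (Submodule R R) → Prop) :
    Nat.card {E : Set (Submodule R R) // Q E}
      = (Finset.univ.filter (fun E : Finset (Submodule R R) => Q ↑E)).card := by
  rw [Nat.card_congr (Equiv.subtypeEquiv (Fintype.finsetEquivSet (α := Submodule R R))
    (fun E => by rw [Fintype.finsetEquivSet_apply])).symm,
    Nat.card_eq_fintype_card, Fintype.card_subtype]

lemma classL_eq (x : R) :
    classL x = {y | y ∈ lgen x ∧ ∀ M ∈ maxROf (lgen x), y ∉ M} := by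
  ext y
  simp only [classL, Set.mem_setOf_eq]
  constructor
  · intro h
    refine ⟨h ▸ Submodule.mem_span_singleton_self y, fun M hM hyM => ?_⟩
    have hle : lgen y ≤ M := Submodule.span_le.2 (Set.singleton_subset_iff.2 hyM)
    rw [h] at hle
    exact absurd hle (not_le_of_gt hM.1)
  · rintro ⟨hyJ, hM⟩
    have hle : lgen y ≤ lgen x := Submodule.span_le.2 (Set.singleton_subset_iff.2 hyJ)
    rcases eq_or_lt_of_le hle with h | h
    · exact h
    · obtain ⟨M, hMmax, hIM⟩ := exists_max_above h
      exact absurd (hIM (Submodule.mem_span_singleton_self y)) (hM M hMmax)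

lemma fiber_sum_eq_mu (J I : Submodule R R) :
    (∑ E ∈ (maxROf J).toFinset.powerset.filter
        (fun E : Finset (Submodule R R) => interIn J (↑E : Set (Submodule R R)) = I),
      (-1:ℂ)^E.card) = (muR I J : ℂ) := by
  set T := (maxROf J).toFinset with hT
  set fib := T.powerset.filter
    (fun E : Finset (Submodule R R) => interIn J (↑E : Set (Submodule R R)) = I) with hfib
  have hmemfib : ∀ E : Finset (Submodule R R),
      E ∈ fib ↔ ((↑E : Set (Submodule R R)) ⊆ maxROf J ∧ interIn J ↑E = I) := by
    intro E
    rw [hfib, Finset.mem_filter, Finset.mem_powerset, hT, ← Set.subset_toFinset]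
  have hcount : ∀ (P : ℕ → Prop)
      (inst : DecidablePred (fun E : Finset (Submodule R R) => P E.card)),
      ((@Finset.filter _ (fun E : Finset (Submodule R R) => P E.card) inst fib).card)
      = Nat.card {E : Set (Submodule R R) //
          E ⊆ maxROf J ∧ interIn J E = I ∧ P (Nat.card E)} := by
    intro P inst
    rw [Finset.filter_congr_decidable]
    rw [← Fintype.card_coe, ← Nat.card_eq_fintype_card]
    apply Nat.card_congr
    refine Equiv.trans (Equiv.subtypeEquivRight
      (q := fun F : Finset (Submodule R R) =>
        (↑F : Set (Submodule R R)) ⊆ maxROf J ∧ interIn J ↑F = I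
          ∧ P (Nat.card (↑F : Set (Submodule R R)))) ?_)
      (Equiv.subtypeEquiv Fintype.finsetEquivSet ?_)
    · intro F
      rw [Finset.mem_filter, hmemfib]
      have : Nat.card (↑F : Set (Submodule R R)) = F.card := by
        rw [Nat.card_coe_set_eq, Set.ncard_coe_finset]
      simp only [this]
      tauto
    · intro F
      rw [Fintype.finsetEquivSet_apply]
  have h1 : ∑ E ∈ fib.filter (fun E => Even E.card), (-1:ℂ)^E.card
      = ((fib.filter (fun E => Even E.card)).card : ℂ) := by
    rw [Finset.sum_congr rfl (fun E hE => (Finset.mem_filter.1 hE).2.neg_one_pow),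
      Finset.sum_const, nsmul_eq_mul, mul_one]
  have h2 : ∑ E ∈ fib.filter (fun E => ¬ Even E.card), (-1:ℂ)^E.card
      = -((fib.filter (fun E => ¬ Even E.card)).card : ℂ) := by
    rw [Finset.sum_congr rfl
      (fun E hE => (Nat.not_even_iff_odd.1 (Finset.mem_filter.1 hE).2).neg_one_pow),
      Finset.sum_const, nsmul_eq_mul, mul_neg_one]
  have hoddeq : fib.filter (fun E => ¬ Even E.card) = fib.filter (fun E => Odd E.card) := by
    ext E
    simp [Nat.not_even_iff_odd]
  have hsum : ∑ E ∈ fib, (-1:ℂ)^E.card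
      = ((fib.filter fun E => Even E.card).card : ℂ)
        - ((fib.filter fun E => Odd E.card).card : ℂ) := by
    rw [← Finset.sum_filter_add_sum_filter_not fib (fun E => Even E.card), h1, h2, hoddeq]
    ring
  by_cases hIJ : I = J
  · subst hIJ
    have h0 : (∅ : Finset (Submodule R R)) ∈ fib := by
      rw [hmemfib]
      refine ⟨by simp, by simp [interIn]⟩
    have huniq : ∀ E ∈ fib, E = ∅ := by
      intro E hE
      by_contra h
      have h1 := interIn_lt ((hmemfib E).1 hE).1 h
      rw [((hmemfib E).1 hE).2] at h1
      exact lt_irrefl _ h1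
    have : fib = {∅} := Finset.eq_singleton_iff_unique_mem.2 ⟨h0, huniq⟩
    rw [this, muR, if_pos rfl]
    simp
  · rw [muR, if_neg hIJ]
    by_cases hcond : I < J ∧ ∃ E : Set (Submodule R R),
        E ⊆ maxROf J ∧ E.Nonempty ∧ interIn J E = I
    · rw [if_pos hcond, hsum]
      rw [hcount Even _, hcount Odd _]
      push_cast
      ring
    · rw [if_neg hcond]
      have hfibe : fib = ∅ := by
        rw [Finset.eq_empty_iff_forall_notMem]
        intro E hE
        obtain ⟨hsub, hint⟩ := (hmemfib E).1 hE
        have hEne : E ≠ ∅ := by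
          rintro rfl
          apply hIJ
          rw [← hint]
          simp [interIn]
        exact hcond ⟨hint ▸ interIn_lt hsub hEne, ⟨↑E, hsub,
          (Finset.coe_nonempty).2 (Finset.nonempty_of_ne_empty hEne), hint⟩⟩
      rw [hfibe]
      simp


end aux

theorem stmt19 [Ring R] [Fintype R] (χ : AddChar R ℂ) (x : R) :
    CchiL χ x =
      ∑ᶠ I ∈ {I : Submodule R R | I ≤ lgen x ∧ ∀ y ∈ I, χ y = 1},
        (Nat.card I : ℂ) * (muR I (lgen x) : ℂ) := by
  set J := lgen x with hJ
  set T := (maxROf J).toFinset with hT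
  set SS : Submodule R R → ℂ := fun I => ∑ y : R, if y ∈ I then χ y else 0 with hSS
  -- Step 1: LHS as a full sum
  have hL1 : CchiL χ x = ∑ y : R, if y ∈ classL x then χ y else 0 := by
    rw [CchiL]
    have h0 : ∑ y : R, (if y ∈ classL x then χ y else 0)
        = ∑ y ∈ Finset.univ.filter (fun y => y ∈ classL x), χ y :=
      (Finset.sum_filter _ _).symm
    rw [h0, ← Set.coe_toFinset (classL x), finsum_mem_coe_finset]
    congr 1
    ext y
    simp
  -- Step 2: indicator expansion
  have key : ∀ y : R,
      (∑ E ∈ T.powerset, (if y ∈ interIn J (↑E : Set (Submodule R R))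
        then ((-1:ℂ))^E.card else 0))
      = if y ∈ classL x then 1 else 0 := by
    intro y
    by_cases hy : y ∈ J
    · have h1 : ∀ E ∈ T.powerset,
          (if y ∈ interIn J (↑E : Set (Submodule R R)) then ((-1:ℂ))^E.card else 0)
          = ∏ M ∈ E, (if y ∈ M then (-1:ℂ) else 0) := by
        intro E hE
        have hsub : (↑E : Set (Submodule R R)) ⊆ maxROf J := by
          rw [← Set.subset_toFinset]; exact Finset.mem_powerset.1 hE
        have hmul : ∀ M ∈ E, (if y ∈ M then (-1:ℂ) else 0)
            = (-1) * (if y ∈ M then (1:ℂ) else 0) := by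
          intro M _; split_ifs <;> ring
        rw [Finset.prod_congr rfl hmul, Finset.prod_mul_distrib, Finset.prod_const,
          Finset.prod_boole]
        by_cases hall : ∀ M ∈ E, y ∈ M
        · rw [if_pos ((mem_interIn hsub y).2 ⟨hy, hall⟩), if_pos hall, mul_one]
        · rw [if_neg (fun hmem => hall ((mem_interIn hsub y).1 hmem).2), if_neg hall, mul_zero]
      rw [Finset.sum_congr rfl h1]
      have h2 := Finset.prod_add (fun M : Submodule R R => if y ∈ M then (-1:ℂ) else 0)
        (fun _ => (1:ℂ)) T
      simp only [Finset.prod_const_one, mul_one] at h2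
      rw [← h2]
      have h3 : ∀ M ∈ T, ((if y ∈ M then (-1:ℂ) else 0) + 1) = if y ∉ M then 1 else 0 := by
        intro M _; split_ifs with h <;> simp_all
      rw [Finset.prod_congr rfl h3, Finset.prod_boole]
      have h4 : (∀ M ∈ T, y ∉ M) ↔ y ∈ classL x := by
        rw [classL_eq, hJ] at *
        constructor
        · intro h
          exact ⟨hy, fun M hM => h M (by rw [hT]; exact Set.mem_toFinset.2 hM)⟩
        · intro h M hM
          exact h.2 M (by rw [hT] at hM; exact Set.mem_toFinset.1 hM)
      by_cases hc : y ∈ classL x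
      · rw [if_pos (h4.2 hc), if_pos hc]
      · rw [if_neg (fun h => hc (h4.1 h)), if_neg hc]
    · have hz : ∀ E ∈ T.powerset,
          (if y ∈ interIn J (↑E : Set (Submodule R R)) then ((-1:ℂ))^E.card else 0) = 0 := by
        intro E hE
        have hsub : (↑E : Set (Submodule R R)) ⊆ maxROf J := by
          rw [← Set.subset_toFinset]; exact Finset.mem_powerset.1 hE
        exact if_neg (fun hmem => hy ((mem_interIn hsub y).1 hmem).1)
      rw [Finset.sum_eq_zero hz, if_neg]
      intro hc
      rw [classL_eq] at hc
      exact hy hc.1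
  -- Step 3: assemble
  have hL2 : CchiL χ x = ∑ E ∈ T.powerset,
      ((-1:ℂ))^E.card * SS (interIn J (↑E : Set (Submodule R R))) := by
    rw [hL1]
    have e1 : ∀ y : R, (if y ∈ classL x then χ y else 0)
        = χ y * (if y ∈ classL x then 1 else 0) := by
      intro y; split_ifs <;> ring
    rw [Finset.sum_congr rfl (fun y _ => e1 y)]
    simp_rw [← key, Finset.mul_sum]
    rw [Finset.sum_comm]
    refine Finset.sum_congr rfl (fun E _ => ?_)
    rw [hSS, Finset.mul_sum]
    refine Finset.sum_congr rfl (fun y _ => ?_)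
    split_ifs <;> ring
  -- Step 4: fiberwise grouping
  have hL3 : CchiL χ x = ∑ I : Submodule R R, SS I * (muR I J : ℂ) := by
    rw [hL2, ← Finset.sum_fiberwise_of_maps_to
      (g := fun E : Finset (Submodule R R) => interIn J (↑E : Set (Submodule R R)))
      (t := (Finset.univ : Finset (Submodule R R))) (fun E _ => Finset.mem_univ _)
      (fun E => ((-1:ℂ))^E.card * SS (interIn J (↑E : Set (Submodule R R))))]
    refine Finset.sum_congr rfl (fun I _ => ?_)
    have e2 : ∀ E ∈ T.powerset.filter (fun E : Finset (Submodule R R) =>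
        interIn J (↑E : Set (Submodule R R)) = I),
        ((-1:ℂ))^E.card * SS (interIn J (↑E : Set (Submodule R R)))
          = SS I * ((-1:ℂ))^E.card := by
      intro E hE
      rw [(Finset.mem_filter.1 hE).2, mul_comm]
    rw [Finset.sum_congr rfl e2, ← Finset.mul_sum]
    congr 1
    exact fiber_sum_eq_mu J I
  -- Step 5: conclude
  rw [hL3]
  have e3 : ∀ I : Submodule R R, SS I * (muR I J : ℂ)
      = if (I ≤ J ∧ ∀ y ∈ I, χ y = 1) then (Nat.card I : ℂ) * (muR I J : ℂ) else 0 := by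
    intro I
    simp only [hSS]
    rw [sum_ideal χ I]
    by_cases htriv : ∀ y ∈ I, χ y = 1
    · rw [if_pos htriv]
      by_cases hle : I ≤ J
      · rw [if_pos ⟨hle, htriv⟩]
      · rw [if_neg (fun h => hle h.1)]
        have hmu : muR I J = 0 := by
          rw [muR, if_neg (fun h => hle (le_of_eq h)),
            if_neg (fun h => hle h.1.le)]
        rw [hmu]
        simp
    · rw [if_neg htriv, if_neg (fun h => htriv h.2), zero_mul]
  rw [Finset.sum_congr rfl (fun I _ => e3 I), ← Finset.sum_filter,
    ← Set.coe_toFinset {I : Submodule R R | I ≤ J ∧ ∀ y ∈ I, χ y = 1},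
    finsum_mem_coe_finset]
  congr 1
  ext I
  simp [Set.mem_toFinset]
end
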